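/- arXiv:2509.22219 — 2 statements merged into one kernel-verified Lean document; each statement's English description precedes it below -/
import Mathlib

section
/- Let A ∈ SO(3) with rows a₁ᵀ, a₂ᵀ, a₃ᵀ, and let Ψ : ℝ³ → ℝᵐ satisfy Ψ(Aᵀ R_z(t) A x) = Ψ(x) for all t ∈ ℝ and all x ∈ ℝ³. Then there exists a function φ : ℝ² → ℝᵐ such that Ψ(x) = φ((a₁·x)² + (a₂·x)², a₃·x) for all x ∈ ℝ³. -/
open Matrix

/-- `R(t)`: the 2×2 rotation matrix. -/
noncomputable def R2 (t : ℝ) : Matrix (Fin 2) (Fin 2) ℝ :=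
  !![Real.cos t, -Real.sin t; Real.sin t, Real.cos t]

/-- `R_z(t)`: rotation about the z-axis in ℝ³. -/
noncomputable def Rz (t : ℝ) : Matrix (Fin 3) (Fin 3) ℝ :=
  !![Real.cos t, -Real.sin t, 0;
     Real.sin t,  Real.cos t, 0;
     0,           0,          1]

/-- `SO n`: real n×n matrices with `AᵀA = 1` and `det A = 1`. -/
def SO (n : ℕ) : Set (Matrix (Fin n) (Fin n) ℝ) :=
  {A | Aᵀ * A = 1 ∧ A.det = 1}

/-! Since `Aᵀ R_z(t) A x = Aᵀ (R_z(t) (A x))`, choosing `t` to rotate `A x` about the z-axis onto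
`(√((a₁·x)² + (a₂·x)²), 0, a₃·x)` shows that `Ψ x` is Ψ at `Aᵀ` of that point, which depends only
on the two invariants. -/

/-- The angle is minus the argument of `a + b i`. -/
lemma exists_rotation_to_nonneg_axis (a b : ℝ) : ∃ t : ℝ,
    Real.cos t * a - Real.sin t * b = Real.sqrt (a ^ 2 + b ^ 2) ∧
    Real.sin t * a + Real.cos t * b = 0 := by
  set z : ℂ := ⟨a, b⟩
  have hnorm : ‖z‖ = Real.sqrt (a ^ 2 + b ^ 2) := by
    rw [Complex.norm_def, Complex.normSq_mk]
    ring_nf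
  have ha : ‖z‖ * Real.cos z.arg = a := Complex.norm_mul_cos_arg z
  have hb : ‖z‖ * Real.sin z.arg = b := Complex.norm_mul_sin_arg z
  refine ⟨-z.arg, ?_, ?_⟩
  · rw [Real.cos_neg, Real.sin_neg, ← hnorm, ← ha, ← hb]
    linear_combination ‖z‖ * Real.sin_sq_add_cos_sq z.arg
  · rw [Real.cos_neg, Real.sin_neg, ← ha, ← hb]
    ring

lemma exists_Rz_mulVec_eq (y : Fin 3 → ℝ) :
    ∃ t : ℝ, Rz t *ᵥ y = ![Real.sqrt (y 0 ^ 2 + y 1 ^ 2), 0, y 2] := by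
  obtain ⟨t, h0, h1⟩ := exists_rotation_to_nonneg_axis (y 0) (y 1)
  refine ⟨t, funext fun i => ?_⟩
  fin_cases i <;> simp [Rz, mulVec, dotProduct, Fin.sum_univ_three] <;> linarith

theorem stmt0_general (m : ℕ) (A : Matrix (Fin 3) (Fin 3) ℝ)
    (Ψ : (Fin 3 → ℝ) → (Fin m → ℝ))
    (hΨ : ∀ (t : ℝ) (x : Fin 3 → ℝ), Ψ ((Aᵀ * Rz t * A).mulVec x) = Ψ x) :
    ∃ φ : ℝ × ℝ → (Fin m → ℝ),
      ∀ x : Fin 3 → ℝ, Ψ x = φ ((A 0 ⬝ᵥ x) ^ 2 + (A 1 ⬝ᵥ x) ^ 2, A 2 ⬝ᵥ x) := by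
  refine ⟨fun p => Ψ (Aᵀ *ᵥ ![Real.sqrt p.1, 0, p.2]), fun x => ?_⟩
  obtain ⟨t, ht⟩ := exists_Rz_mulVec_eq (A *ᵥ x)
  calc Ψ x = Ψ ((Aᵀ * Rz t * A) *ᵥ x) := (hΨ t x).symm
    _ = Ψ (Aᵀ *ᵥ (Rz t *ᵥ (A *ᵥ x))) := by rw [mulVec_mulVec, mulVec_mulVec, Matrix.mul_assoc]
    _ = _ := by rw [ht]; rfl

/-- If `Ψ : ℝ³ → ℝᵐ` is invariant under `x ↦ Aᵀ R_z(t) A x` for all `t`,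
where `A ∈ SO(3)` has rows `a₁ᵀ, a₂ᵀ, a₃ᵀ`, then
`Ψ(x) = φ((a₁·x)² + (a₂·x)², a₃·x)` for some `φ : ℝ² → ℝᵐ`. -/
theorem stmt0 (m : ℕ) (A : Matrix (Fin 3) (Fin 3) ℝ) (hA : A ∈ SO 3)
    (Ψ : (Fin 3 → ℝ) → (Fin m → ℝ))
    (hΨ : ∀ (t : ℝ) (x : Fin 3 → ℝ), Ψ ((Aᵀ * Rz t * A).mulVec x) = Ψ x) :
    ∃ φ : ℝ × ℝ → (Fin m → ℝ),
      ∀ x : Fin 3 → ℝ, Ψ x = φ ((A 0 ⬝ᵥ x) ^ 2 + (A 1 ⬝ᵥ x) ^ 2, A 2 ⬝ᵥ x) :=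
  stmt0_general m A Ψ hΨ
end

section
/- For every real skew-symmetric 3×3 matrix B (i.e. Bᵀ = −B) there exist A ∈ SO(3) and λ ≥ 0 such that exp(tB) = Aᵀ R_z(tλ) A for all t ∈ ℝ. In particular, every one-parameter subgroup {exp(tB) : t ∈ ℝ} of SO(3) equals {Aᵀ R_z(s) A : s ∈ ℝ} for some A ∈ SO(3), or is trivial. -/
/-!
A real skew-symmetric `3 × 3` matrix is the cross-product matrix `[ω]ₓ` of a vector `ω`.
Completing `ω / |ω|` to a positively oriented orthonormal frame gives `A ∈ SO(3)` with
`[ω]ₓ = Aᵀ (|ω| L_z) A`, where `L_z` generates the rotations about the z-axis. Orthogonal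
conjugation commutes with `exp`, and `exp (s L_z) = R_z(s)` because `(z, r) ↦ diag(z, r)`, with `z`
written as a `2 × 2` block, embeds the algebra `ℂ × ℝ` into matrices, sending `(s i, 0)` to `s L_z`
and `(e^{s i}, 1)` to `R_z(s)`.
-/

open Matrix NormedSpace

def Lz : Matrix (Fin 3) (Fin 3) ℝ := !![0, -1, 0; 1, 0, 0; 0, 0, 0]

/-- `crossMatrix a b c *ᵥ v = (a, b, c) ×₃ v`. -/
def crossMatrix (a b c : ℝ) : Matrix (Fin 3) (Fin 3) ℝ := !![0, -c, b; c, 0, -a; -b, a, 0]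

lemma exp_transpose_mul_mul_of_orthogonal {n : Type*} [Fintype n] [DecidableEq n]
    {A : Matrix n n ℝ} (hA : Aᵀ * A = 1) (X : Matrix n n ℝ) :
    exp (Aᵀ * X * A) = Aᵀ * exp X * A := by
  simpa only [inv_eq_left_inv hA] using exp_conj' A X (IsUnit.of_mul_eq_one_right Aᵀ hA)

/-- With `ω = (a, b, c)`, the rows of `A` are `u = e₃ × ω / ρ`, `v = ω × u / λ`, `w = ω / λ`. -/
lemma crossMatrix_normal_form_of_ne_zero {a b c ρ lam : ℝ} (hρ : ρ ≠ 0) (hlam : lam ≠ 0)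
    (hρ2 : ρ ^ 2 = a ^ 2 + b ^ 2) (hlam2 : lam ^ 2 = ρ ^ 2 + c ^ 2) :
    let A : Matrix (Fin 3) (Fin 3) ℝ :=
      !![-b / ρ, a / ρ, 0;
         -(c * a) / (lam * ρ), -(c * b) / (lam * ρ), ρ / lam;
         a / lam, b / lam, c / lam]
    A * Aᵀ = 1 ∧ A.det = 1 ∧ Aᵀ * (lam • Lz) * A = crossMatrix a b c := by
  intro A
  refine ⟨?_, ?_, ?_⟩
  · ext i j
    fin_cases i <;> fin_cases j <;>
      simp [A, Matrix.mul_apply, Fin.sum_univ_three] <;> field_simp <;> grind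
  · rw [det_fin_three]
    simp only [A, of_apply, cons_val', cons_val_zero, cons_val_fin_one, cons_val_one, cons_val,
      zero_mul, add_zero, sub_zero]
    field_simp
    grind
  · ext i j
    fin_cases i <;> fin_cases j <;>
      simp [A, Lz, crossMatrix, Matrix.mul_apply, Fin.sum_univ_three] <;> field_simp <;> grind

noncomputable def complexProdRealToMatrix :
    (ℂ × ℝ) →ₐ[ℝ] Matrix (Fin 3) (Fin 3) ℝ where
  toFun p := !![p.1.re, -p.1.im, 0; p.1.im, p.1.re, 0; 0, 0, p.2]
  map_one' := by ext i j; fin_cases i <;> fin_cases j <;> simp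
  map_mul' p q := by
    ext i j
    fin_cases i <;> fin_cases j <;> simp [Matrix.mul_apply, Fin.sum_univ_three] <;> ring
  map_zero' := by ext i j; fin_cases i <;> fin_cases j <;> simp
  map_add' p q := by ext i j; fin_cases i <;> fin_cases j <;> simp; ring
  commutes' r := by ext i j; fin_cases i <;> fin_cases j <;> simp [algebraMap_matrix_apply]

lemma exp_smul_Lz (s : ℝ) : exp (s • Lz) = Rz s := by
  have hgen : s • Lz = complexProdRealToMatrix (s * Complex.I, 0) := by
    ext i j; fin_cases i <;> fin_cases j <;> simp [Lz, complexProdRealToMatrix]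
  have hexp : exp ((s * Complex.I, 0) : ℂ × ℝ) = (Complex.exp (s * Complex.I), 1) := by
    ext1
    · rw [Prod.fst_exp, Complex.exp_eq_exp_ℂ]
    · rw [Prod.snd_exp, exp_zero]
  have hcont : Continuous complexProdRealToMatrix :=
    complexProdRealToMatrix.toLinearMap.continuous_of_finiteDimensional
  -- `map_exp` needs a normed ring structure on the matrices; any one will do.
  have hmap : exp (complexProdRealToMatrix (s * Complex.I, 0)) =
      complexProdRealToMatrix (exp ((s * Complex.I, 0) : ℂ × ℝ)) :=
    open scoped Norms.Operator in (map_exp _ hcont _).symm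
  rw [hgen, hmap, hexp]
  ext i j
  fin_cases i <;> fin_cases j <;>
    simp [complexProdRealToMatrix, Rz, Complex.exp_ofReal_mul_I_re, Complex.exp_ofReal_mul_I_im]

lemma eq_crossMatrix_of_transpose_eq_neg {B : Matrix (Fin 3) (Fin 3) ℝ} (hB : Bᵀ = -B) :
    B = crossMatrix (B 2 1) (B 0 2) (B 1 0) := by
  have hskew (i j : Fin 3) : B j i = -B i j := by simpa using congr_fun (congr_fun hB i) j
  ext i j
  fin_cases i <;> fin_cases j <;> simp [crossMatrix] <;>
    linarith [hskew 0 0, hskew 1 1, hskew 2 2, hskew 1 0, hskew 0 2, hskew 2 1]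

lemma exists_SO3_crossMatrix_eq (a b c : ℝ) :
    ∃ A ∈ SO 3, crossMatrix a b c = Aᵀ * (√(a ^ 2 + b ^ 2 + c ^ 2) • Lz) * A := by
  rcases eq_or_ne (a ^ 2 + b ^ 2) 0 with hab | hab
  · obtain ⟨rfl, rfl⟩ : a = 0 ∧ b = 0 := by
      constructor <;> nlinarith [sq_nonneg a, sq_nonneg b]
    rcases le_or_gt 0 c with hc | hc
    · refine ⟨1, ⟨by simp, by simp⟩, ?_⟩
      ext i j
      fin_cases i <;> fin_cases j <;> simp [crossMatrix, Lz, Real.sqrt_sq hc]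
    · refine ⟨!![1, 0, 0; 0, -1, 0; 0, 0, -1], ⟨?_, ?_⟩, ?_⟩
      · ext i j; fin_cases i <;> fin_cases j <;> simp [mul_apply, Fin.sum_univ_three, one_apply]
      · simp [det_fin_three]
      · ext i j
        fin_cases i <;> fin_cases j <;>
          simp [crossMatrix, Lz, mul_apply, Fin.sum_univ_three, Real.sqrt_sq_eq_abs, abs_of_neg hc]
  · have hab' : 0 ≤ a ^ 2 + b ^ 2 := by positivity
    have hρ : 0 < √(a ^ 2 + b ^ 2) := Real.sqrt_pos.mpr (hab'.lt_of_ne' hab)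
    have hlam : 0 < √(a ^ 2 + b ^ 2 + c ^ 2) := Real.sqrt_pos.mpr (by positivity)
    obtain ⟨hAAt, hdet, hconj⟩ := crossMatrix_normal_form_of_ne_zero (c := c) hρ.ne' hlam.ne'
      (Real.sq_sqrt hab') (by rw [Real.sq_sqrt (by positivity), Real.sq_sqrt hab'])
    exact ⟨_, ⟨mul_eq_one_comm.mp hAAt, hdet⟩, hconj.symm⟩

lemma Rz_zero : Rz 0 = 1 := by
  ext i j; fin_cases i <;> fin_cases j <;> simp [Rz, one_apply]

lemma setOf_conj_Rz_mul_eq {A : Matrix (Fin 3) (Fin 3) ℝ} {lam : ℝ} (hlam : lam ≠ 0) :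
    {G | ∃ t : ℝ, G = Aᵀ * Rz (t * lam) * A} = {G | ∃ s : ℝ, G = Aᵀ * Rz s * A} := by
  ext G
  constructor
  · rintro ⟨t, rfl⟩
    exact ⟨_, rfl⟩
  · rintro ⟨s, rfl⟩
    exact ⟨s / lam, by rw [div_mul_cancel₀ s hlam]⟩

lemma setOf_conj_Rz_mul_zero {A : Matrix (Fin 3) (Fin 3) ℝ} (hA : Aᵀ * A = 1) :
    {G | ∃ t : ℝ, G = Aᵀ * Rz (t * 0) * A} = {1} := by
  ext G
  simp [Rz_zero, hA]

/-- For every real skew-symmetric 3×3 matrix `B` there exist `A ∈ SO(3)` and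
`λ ≥ 0` with `exp(tB) = Aᵀ R_z(tλ) A` for all `t`. In particular the one-parameter subgroup
`{exp(tB) : t ∈ ℝ}` equals `{Aᵀ R_z(s) A : s ∈ ℝ}` for some `A ∈ SO(3)`, or is trivial. -/
theorem stmt2 (B : Matrix (Fin 3) (Fin 3) ℝ) (hB : Bᵀ = -B) :
    (∃ A ∈ SO 3, ∃ lam : ℝ, 0 ≤ lam ∧
        ∀ t : ℝ, NormedSpace.exp (t • B) = Aᵀ * Rz (t * lam) * A) ∧
      ((∃ A ∈ SO 3,
          {G : Matrix (Fin 3) (Fin 3) ℝ | ∃ t : ℝ, G = NormedSpace.exp (t • B)} =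
            {G : Matrix (Fin 3) (Fin 3) ℝ | ∃ s : ℝ, G = Aᵀ * Rz s * A}) ∨
        {G : Matrix (Fin 3) (Fin 3) ℝ | ∃ t : ℝ, G = NormedSpace.exp (t • B)} = {1}) := by
  obtain ⟨A, hA, hBA⟩ := exists_SO3_crossMatrix_eq (B 2 1) (B 0 2) (B 1 0)
  rw [← eq_crossMatrix_of_transpose_eq_neg hB] at hBA
  generalize hlam : √(B 2 1 ^ 2 + B 0 2 ^ 2 + B 1 0 ^ 2) = lam at hBA
  have hexp (t : ℝ) : exp (t • B) = Aᵀ * Rz (t * lam) * A := by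
    rw [← exp_smul_Lz, ← exp_transpose_mul_mul_of_orthogonal hA.1, hBA]
    simp only [Matrix.mul_smul, Matrix.smul_mul, smul_smul]
  refine ⟨⟨A, hA, lam, hlam ▸ Real.sqrt_nonneg _, hexp⟩, ?_⟩
  simp_rw [hexp]
  rcases eq_or_ne lam 0 with hlam0 | hlam0
  · exact .inr (hlam0 ▸ setOf_conj_Rz_mul_zero hA.1)
  · exact .inl ⟨A, hA, setOf_conj_Rz_mul_eq hlam0⟩
end
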